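/- Let G = (V,E) be a graph on {1,…,n} with maximum degree d, let (i,j) ∈ E, and let a Bernoulli(p) test include each node independently with probability p. Define the per-test masking probability p₁^{ij} as the probability that it is NOT the case that both i and j are in the test and no other edge of G is covered by the test. Then 1 − p²·(1 − P_G[Y=1] + (1+2d)p²) ≤ p₁^{ij} ≤ 1 − p²·(1 − P_G[Y=1] − 2dp). -/

import Mathlib

open scoped BigOperators Classical
open Finset Filter

noncomputable section

/-- The set of all potential edges: unordered pairs of distinct nodes of `Fin n`. -/
def allPairs (n : ℕ) : Finset (Sym2 (Fin n)) :=
  Finset.univ.filter fun e => ¬ e.IsDiag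

/-- Both endpoints of the pair `e` lie in the test `L`. -/
def pairIn {n : ℕ} (e : Sym2 (Fin n)) (L : Finset (Fin n)) : Prop :=
  ∀ v ∈ e, v ∈ L

/-- The test `L` covers some edge of the edge set `E` (positive outcome `Y = 1`). -/
def covers {n : ℕ} (E : Finset (Sym2 (Fin n))) (L : Finset (Fin n)) : Prop :=
  ∃ e ∈ E, pairIn e L

/-- ER(n,q) probability weight of a given edge set `E`. -/
def erWeight (n : ℕ) (q : ℝ) (E : Finset (Sym2 (Fin n))) : ℝ :=
  q ^ E.card * (1 - q) ^ ((allPairs n).card - E.card)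

/-- Probability of an event under the Erdős–Rényi random graph ER(n,q). -/
def erProb (n : ℕ) (q : ℝ) (A : Finset (Sym2 (Fin n)) → Prop) : ℝ :=
  ∑ E ∈ (allPairs n).powerset, if A E then erWeight n q E else 0

/-- Bernoulli(p) probability weight of a single test `L ⊆ {1,…,n}`. -/
def testWeight (n : ℕ) (p : ℝ) (L : Finset (Fin n)) : ℝ :=
  p ^ L.card * (1 - p) ^ (n - L.card)

/-- Probability of an event for a single Bernoulli(p) test. -/
def bernProb (n : ℕ) (p : ℝ) (A : Finset (Fin n) → Prop) : ℝ :=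
  ∑ L : Finset (Fin n), if A L then testWeight n p L else 0

/-- Probability weight of `t` i.i.d. Bernoulli(p) tests. -/
def testsWeight (n t : ℕ) (p : ℝ) (Ls : Fin t → Finset (Fin n)) : ℝ :=
  ∏ i, testWeight n p (Ls i)

/-- Probability of an event for `t` i.i.d. Bernoulli(p) tests. -/
def bernTestsProb (n t : ℕ) (p : ℝ) (A : (Fin t → Finset (Fin n)) → Prop) : ℝ :=
  ∑ Ls : Fin t → Finset (Fin n), if A Ls then testsWeight n t p Ls else 0

/-- Joint probability over an ER(n,q) graph and `t` i.i.d. Bernoulli(p) tests. -/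
def erTestsProb (n t : ℕ) (q p : ℝ)
    (A : Finset (Sym2 (Fin n)) → (Fin t → Finset (Fin n)) → Prop) : ℝ :=
  ∑ E ∈ (allPairs n).powerset, ∑ Ls : Fin t → Finset (Fin n),
    if A E Ls then erWeight n q E * testsWeight n t p Ls else 0

/-- Degree of node `v` in the edge set `E`. -/
def degOf {n : ℕ} (E : Finset (Sym2 (Fin n))) (v : Fin n) : ℕ :=
  (E.filter fun e => v ∈ e).card

/-- Maximum degree of the edge set `E`. -/
def maxDeg {n : ℕ} (E : Finset (Sym2 (Fin n))) : ℕ :=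
  Finset.univ.sup (degOf E)

/-- Average number of edges of ER(n, q n): `k̄ = q·C(n,2)`. -/
def kbar (q : ℕ → ℝ) (n : ℕ) : ℝ := q n * (n.choose 2 : ℝ)

/-- Two pairs are vertex-disjoint. -/
def sym2Disjoint {n : ℕ} (e e' : Sym2 (Fin n)) : Prop := ∀ v, v ∈ e → v ∉ e'

/-! With `S = {i, j}`, a test masks `e` iff `S ⊆ L` and no edge other than `e` is covered by
`L ∪ S`. The second condition only depends on `L \ S`, so by independence the masking
probability is `p² R`, where `R` is the probability of that condition. A test that misses part
of `S` but satisfies the condition covers no edge, whence `R ≤ (1 - P[Y=1]) + p²`. Conversely, a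
test that covers no edge but violates the condition contains a neighbour of `i` or `j`; there are
at most `2d` of them, whence `1 - P[Y=1] ≤ R + 2dp`. -/

section BernoulliTest

variable {n : ℕ} {p : ℝ}

lemma testWeight_nonneg (hp0 : 0 ≤ p) (hp1 : p ≤ 1) (L : Finset (Fin n)) :
    0 ≤ testWeight n p L :=
  mul_nonneg (pow_nonneg hp0 _) (pow_nonneg (sub_nonneg.2 hp1) _)

lemma sum_testWeight (n : ℕ) (p : ℝ) : ∑ L : Finset (Fin n), testWeight n p L = 1 := by
  simpa [testWeight, powerset_univ] using sum_pow_mul_eq_add_pow p (1 - p) (univ : Finset (Fin n))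

lemma one_sub_mul_testWeight_insert {v : Fin n} {L : Finset (Fin n)} (hv : v ∉ L) :
    (1 - p) * testWeight n p (insert v L) = p * testWeight n p L := by
  obtain ⟨m, hm⟩ : ∃ m, n - #L = m + 1 :=
    ⟨n - #L - 1, by have := card_lt_univ_of_notMem hv; simp at this; omega⟩
  have hm' : n - (#L + 1) = m := by omega
  rw [testWeight, testWeight, card_insert_of_notMem hv, hm, hm']
  ring

lemma bernProb_mono (hp0 : 0 ≤ p) (hp1 : p ≤ 1) {A B : Finset (Fin n) → Prop}
    (h : ∀ L, A L → B L) : bernProb n p A ≤ bernProb n p B := by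
  refine sum_le_sum fun L _ => ?_
  by_cases hA : A L
  · simp [hA, h L hA]
  · simp only [hA, if_false]
    split_ifs
    exacts [testWeight_nonneg hp0 hp1 L, le_rfl]

lemma bernProb_true (n : ℕ) (p : ℝ) : bernProb n p (fun _ => True) = 1 := by
  simp [bernProb, sum_testWeight]

lemma bernProb_le_one (hp0 : 0 ≤ p) (hp1 : p ≤ 1) (A : Finset (Fin n) → Prop) :
    bernProb n p A ≤ 1 :=
  bernProb_true n p ▸ bernProb_mono hp0 hp1 fun _ _ => trivial

lemma bernProb_not (A : Finset (Fin n) → Prop) :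
    bernProb n p (fun L => ¬ A L) = 1 - bernProb n p A := by
  rw [eq_sub_iff_add_eq, ← sum_testWeight n p, bernProb, bernProb, ← sum_add_distrib]
  refine sum_congr rfl fun L _ => ?_
  by_cases hA : A L <;> simp [hA]

lemma bernProb_and_add_and_not (A B : Finset (Fin n) → Prop) :
    bernProb n p (fun L => A L ∧ B L) + bernProb n p (fun L => ¬ A L ∧ B L) =
      bernProb n p B := by
  rw [bernProb, bernProb, bernProb, ← sum_add_distrib]
  refine sum_congr rfl fun L _ => ?_
  by_cases hA : A L <;> simp [hA]

lemma bernProb_le_add_sum (hp0 : 0 ≤ p) (hp1 : p ≤ 1) {ι : Type*} (s : Finset ι)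
    {A B : Finset (Fin n) → Prop} (C : ι → Finset (Fin n) → Prop)
    (h : ∀ L, A L → B L ∨ ∃ k ∈ s, C k L) :
    bernProb n p A ≤ bernProb n p B + ∑ k ∈ s, bernProb n p (C k) := by
  simp only [bernProb]
  rw [sum_comm, ← sum_add_distrib]
  refine sum_le_sum fun L _ => ?_
  have hw := testWeight_nonneg hp0 hp1 L
  have hB : 0 ≤ if B L then testWeight n p L else 0 := by split_ifs <;> simp [hw]
  have hC : 0 ≤ ∑ k ∈ s, if C k L then testWeight n p L else 0 :=
    sum_nonneg fun k _ => by split_ifs <;> simp [hw]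
  by_cases hA : A L
  · rw [if_pos hA]
    rcases h L hA with hBL | ⟨k, hk, hCk⟩
    · rw [if_pos hBL]; linarith
    · have := single_le_sum (f := fun k => if C k L then testWeight n p L else 0)
        (fun k _ => by split_ifs <;> simp [hw]) hk
      simp only [if_pos hCk] at this
      linarith
  · rw [if_neg hA]; linarith

lemma bernProb_mem_and (v : Fin n) (B : Finset (Fin n) → Prop)
    (hB : ∀ L, B (L.erase v) ↔ B L) :
    bernProb n p (fun L => v ∈ L ∧ B L) = p * bernProb n p B := by
  have hsplit : ∀ A : Finset (Fin n) → Prop, bernProb n p A =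
      ∑ L ∈ (univ.erase v).powerset, ((if A L then testWeight n p L else 0) +
        if A (insert v L) then testWeight n p (insert v L) else 0) := by
    intro A
    have h : (univ : Finset (Finset (Fin n))) = (insert v (univ.erase v)).powerset := by
      rw [insert_erase (mem_univ v), powerset_univ]
    rw [bernProb, h, sum_powerset_insert (notMem_erase v univ), sum_add_distrib]
  rw [hsplit, hsplit, mul_sum]
  refine sum_congr rfl fun L hL => ?_
  have hv : v ∉ L := fun h => notMem_erase v univ (mem_powerset.1 hL h)
  have hBL : B (insert v L) ↔ B L := by rw [← hB, erase_insert hv]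
  simp only [hv, mem_insert_self, false_and, true_and, if_false, zero_add, hBL]
  split_ifs
  · linear_combination one_sub_mul_testWeight_insert (p := p) hv
  · simp

lemma bernProb_mem (v : Fin n) : bernProb n p (fun L => v ∈ L) = p := by
  have h := bernProb_mem_and (p := p) v (fun _ => True) (by simp)
  simp only [and_true] at h
  rwa [bernProb_true, mul_one] at h

lemma bernProb_subset_and (S : Finset (Fin n)) (B : Finset (Fin n) → Prop)
    (hB : ∀ L, B (L \ S) ↔ B L) :
    bernProb n p (fun L => S ⊆ L ∧ B L) = p ^ #S * bernProb n p B := by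
  induction S using Finset.induction_on with
  | empty => simp
  | insert v T hvT ih =>
    have hBT : ∀ L, B (L \ T) ↔ B L := fun L => by
      rw [← hB, ← hB L, sdiff_sdiff_left, sup_eq_right.2 (subset_insert v T)]
    have hBv : ∀ L, (T ⊆ L.erase v ∧ B (L.erase v)) ↔ (T ⊆ L ∧ B L) := fun L => by
      have hL : L.erase v \ insert v T = L \ insert v T := by
        ext x
        by_cases hx : x = v <;> simp [hx]
      rw [subset_erase, ← hB, hL, hB]
      simp [hvT]
    have hev : (fun L => insert v T ⊆ L ∧ B L) = fun L => v ∈ L ∧ (T ⊆ L ∧ B L) := by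
      funext L; rw [insert_subset_iff, and_assoc]
    rw [hev, bernProb_mem_and v _ hBv, ih hBT, card_insert_of_notMem hvT, pow_succ]
    ring

end BernoulliTest

section Graph

variable {n : ℕ}

lemma pairIn_iff_toFinset_subset (e : Sym2 (Fin n)) (L : Finset (Fin n)) :
    pairIn e L ↔ e.toFinset ⊆ L := by
  simp [pairIn, subset_iff, Sym2.mem_toFinset]

def nbhd (E : Finset (Sym2 (Fin n))) (S : Finset (Fin n)) : Finset (Fin n) :=
  S.biUnion fun u => univ.filter fun w => s(u, w) ∈ E

lemma card_nbhd_le (E : Finset (Sym2 (Fin n))) (S : Finset (Fin n)) :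
    #(nbhd E S) ≤ #S * maxDeg E := by
  refine card_biUnion_le.trans ((sum_le_card_nsmul _ _ _ fun u _ => ?_).trans_eq (smul_eq_mul _ _))
  calc #(univ.filter fun w => s(u, w) ∈ E) ≤ degOf E u :=
        card_le_card_of_injOn (fun w => s(u, w))
          (fun w hw => mem_filter.2 ⟨(mem_filter.1 hw).2, Sym2.mem_mk_left u w⟩)
          (fun _ _ _ _ h => Sym2.congr_right.1 h)
    _ ≤ maxDeg E := le_sup (mem_univ u)

def othersUncovered (E : Finset (Sym2 (Fin n))) (e : Sym2 (Fin n)) (L : Finset (Fin n)) : Prop :=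
  ∀ e' ∈ E, e' ≠ e → ¬ pairIn e' (L ∪ e.toFinset)

variable {E : Finset (Sym2 (Fin n))} {e : Sym2 (Fin n)} {L : Finset (Fin n)}

lemma othersUncovered_sdiff :
    othersUncovered E e (L \ e.toFinset) ↔ othersUncovered E e L := by
  rw [othersUncovered, othersUncovered, sdiff_union_self_eq_union]

lemma masking_iff :
    (pairIn e L ∧ ∀ e' ∈ E, e' ≠ e → ¬ pairIn e' L) ↔
      e.toFinset ⊆ L ∧ othersUncovered E e L := by
  rw [pairIn_iff_toFinset_subset, othersUncovered]
  exact and_congr_right fun h => by rw [union_eq_left.2 h]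

lemma not_covers_of_not_subset (hS : ¬ e.toFinset ⊆ L) (h : othersUncovered E e L) :
    ¬ covers E L := by
  rintro ⟨e', he', hin⟩
  by_cases hne : e' = e
  · subst hne
    exact hS ((pairIn_iff_toFinset_subset _ _).1 hin)
  · exact h e' he' hne fun v hv => mem_union_left _ (hin v hv)

lemma exists_mem_nbhd_of_not_covers (hsimple : ∀ e ∈ E, ¬ e.IsDiag) (hL : ¬ covers E L)
    (h : ¬ othersUncovered E e L) : ∃ w ∈ nbhd E e.toFinset, w ∈ L := by
  obtain ⟨e', he', hne, hin⟩ : ∃ e' ∈ E, e' ≠ e ∧ pairIn e' (L ∪ e.toFinset) := by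
    simpa [othersUncovered] using h
  obtain ⟨u, hu, huL⟩ : ∃ u ∈ e', u ∉ L := by
    by_contra! h
    exact hL ⟨e', he', h⟩
  obtain ⟨w, rfl⟩ := Sym2.mem_iff_exists.1 hu
  have huS : u ∈ e.toFinset := (mem_union.1 (hin u hu)).resolve_left huL
  by_cases hwL : w ∈ L
  · exact ⟨w, mem_biUnion.2 ⟨u, huS, mem_filter.2 ⟨mem_univ w, he'⟩⟩, hwL⟩
  · have hwS : w ∈ e.toFinset :=
      (mem_union.1 (hin w (Sym2.mem_mk_right u w))).resolve_left hwL
    have huw : u ≠ w := fun h => hsimple _ he' (by simp [h])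
    exact absurd ((Sym2.mem_and_mem_iff huw).1
      ⟨Sym2.mem_toFinset.1 huS, Sym2.mem_toFinset.1 hwS⟩).symm hne

variable {p : ℝ}

lemma bernProb_masking (he : ¬ e.IsDiag) :
    bernProb n p (fun L => pairIn e L ∧ ∀ e' ∈ E, e' ≠ e → ¬ pairIn e' L) =
      p ^ 2 * bernProb n p (othersUncovered E e) := by
  rw [← Sym2.card_toFinset_of_not_isDiag e he,
    ← bernProb_subset_and _ _ fun L => othersUncovered_sdiff]
  simp only [masking_iff]

lemma bernProb_othersUncovered_le (hp0 : 0 ≤ p) (hp1 : p ≤ 1) (he : ¬ e.IsDiag) :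
    bernProb n p (othersUncovered E e) ≤ bernProb n p (fun L => ¬ covers E L) + p ^ 2 := by
  have hsplit := bernProb_and_add_and_not (p := p) (fun L => e.toFinset ⊆ L) (othersUncovered E e)
  have hmiss : bernProb n p (fun L => ¬ e.toFinset ⊆ L ∧ othersUncovered E e L) ≤
      bernProb n p (fun L => ¬ covers E L) :=
    bernProb_mono hp0 hp1 fun L hL => not_covers_of_not_subset hL.1 hL.2
  rw [bernProb_subset_and _ _ fun L => othersUncovered_sdiff,
    Sym2.card_toFinset_of_not_isDiag e he] at hsplit
  nlinarith [bernProb_le_one hp0 hp1 (othersUncovered E e)]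

lemma bernProb_not_covers_le (hp0 : 0 ≤ p) (hp1 : p ≤ 1) (hsimple : ∀ e ∈ E, ¬ e.IsDiag)
    (e : Sym2 (Fin n)) :
    bernProb n p (fun L => ¬ covers E L) ≤
      bernProb n p (othersUncovered E e) + 2 * maxDeg E * p := by
  refine (bernProb_le_add_sum hp0 hp1 (nbhd E e.toFinset) (B := othersUncovered E e)
    (fun w L => w ∈ L) fun L hL => ?_).trans ?_
  · exact or_iff_not_imp_left.2 (exists_mem_nbhd_of_not_covers hsimple hL)
  · have hN : #(nbhd E e.toFinset) ≤ 2 * maxDeg E := by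
      refine (card_nbhd_le E _).trans (Nat.mul_le_mul_right _ ?_)
      rw [Sym2.card_toFinset]
      split_ifs <;> omega
    have hN' : (#(nbhd E e.toFinset) : ℝ) ≤ 2 * maxDeg E := by exact_mod_cast hN
    simp only [bernProb_mem, sum_const, nsmul_eq_mul]
    nlinarith

end Graph

/-- bounds on the per-test masking probability.
Let `G` have maximum degree `d`, let `(i,j) ∈ E`, and let a Bernoulli(p) test include each
node independently with probability `p`.  With `p₁^{ij}` the probability that it is NOT the
case that both `i` and `j` are in the test and no other edge is covered,
`1 − p²(1 − P_G[Y=1] + (1+2d)p²) ≤ p₁^{ij} ≤ 1 − p²(1 − P_G[Y=1] − 2dp)`. -/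
theorem statement12 (n d : ℕ) (p : ℝ) (hp0 : 0 ≤ p) (hp1 : p ≤ 1)
    (E : Finset (Sym2 (Fin n))) (hsimple : ∀ e ∈ E, ¬ e.IsDiag)
    (hmax : maxDeg E = d) (e : Sym2 (Fin n)) (he : e ∈ E) :
    1 - p ^ 2 * (1 - bernProb n p (covers E) + (1 + 2 * d) * p ^ 2) ≤
      1 - bernProb n p (fun L => pairIn e L ∧ ∀ e' ∈ E, e' ≠ e → ¬ pairIn e' L) ∧
    1 - bernProb n p (fun L => pairIn e L ∧ ∀ e' ∈ E, e' ≠ e → ¬ pairIn e' L) ≤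
      1 - p ^ 2 * (1 - bernProb n p (covers E) - 2 * d * p) := by
  have hupper := bernProb_othersUncovered_le hp0 hp1 (E := E) (hsimple e he)
  have hlower := bernProb_not_covers_le hp0 hp1 hsimple e
  rw [hmax] at hlower
  rw [bernProb_masking (hsimple e he), ← bernProb_not]
  constructor
  · nlinarith [mul_le_mul_of_nonneg_left hupper (sq_nonneg p),
      mul_nonneg (Nat.cast_nonneg d : (0 : ℝ) ≤ d) (pow_nonneg (sq_nonneg p) 2)]
  · nlinarith [mul_le_mul_of_nonneg_left hlower (sq_nonneg p)]

end
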